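/- Let G be a connected plane graph with connected dual G′, T a spanning tree of G, and T′ = {e′ : e ∉ T} its dual spanning tree. For any edge e ∈ T with dual edge e′ ∉ T′ and any edge f ∉ T with dual f′ ∈ T′: f ∈ cut(T,e) if and only if f′ ∈ cyc(T′, e′), and equivalently e ∈ cyc(T,f) if and only if e′ ∈ cut(T′, f′). Consequently, if the dual ordering of edges preserves order, an edge e ∈ T is internally active for T in G if and only if e′ is externally active for T′ in G′. -/

import Mathlib

structure Multigraph (V E : Type) where
  ends : E → Sym2 V

namespace Multigraph

variable {V E V' : Type}

def Adj (G : Multigraph V E) (S : Set E) (a b : V) : Prop :=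
  ∃ e ∈ S, G.ends e = s(a, b)

def ConnOn (G : Multigraph V E) (S : Set E) : Prop :=
  ∀ a b : V, Relation.EqvGen (G.Adj S) a b

def IsSpanningTree (G : Multigraph V E) (T : Finset E) : Prop :=
  G.ConnOn ↑T ∧ T.card + 1 = Nat.card V

def cut [DecidableEq E] (G : Multigraph V E) (T : Finset E) (e : E) : Set E :=
  {f | G.ConnOn ↑((T.erase e) ∪ {f})}

def cyc [DecidableEq E] (G : Multigraph V E) (T : Finset E) (f : E) : Set E :=
  {g | (g ∈ T ∨ g = f) ∧ G.ConnOn ↑((T.erase g) ∪ {f})}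

def IsBridge (G : Multigraph V E) (e : E) : Prop :=
  ¬ G.ConnOn {f | f ≠ e}

def IntActive [DecidableEq E] [LinearOrder E] (G : Multigraph V E) (T : Finset E) (e : E) : Prop :=
  e ∈ T ∧ ∀ f ∈ G.cut T e, e ≤ f

def ExtActive [DecidableEq E] [LinearOrder E] (G : Multigraph V E) (T : Finset E) (f : E) : Prop :=
  f ∉ T ∧ ∀ g ∈ G.cyc T f, f ≤ g

def IntInactive [DecidableEq E] [LinearOrder E] (G : Multigraph V E) (T : Finset E) (e : E) : Prop :=
  e ∈ T ∧ ¬ G.IntActive T e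

def ExtInactive [DecidableEq E] [LinearOrder E] (G : Multigraph V E) (T : Finset E) (f : E) : Prop :=
  f ∉ T ∧ ¬ G.ExtActive T f

def eqvSetoid (G : Multigraph V E) (S : Set E) : Setoid V :=
  ⟨Relation.EqvGen (G.Adj S), Relation.EqvGen.is_equivalence _⟩

noncomputable def compCount (G : Multigraph V E) (S : Set E) : ℕ :=
  Nat.card (Quotient (G.eqvSetoid S))

noncomputable def rk [Fintype V] (G : Multigraph V E) (S : Set E) : ℕ :=
  Fintype.card V - G.compCount S

def IsDualPair [Fintype V] [Fintype V'] [Fintype E] [DecidableEq E]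
    (G : Multigraph V E) (G' : Multigraph V' E) : Prop :=
  ∀ S : Finset E, G'.rk ↑S + G.rk ↑(Finset.univ : Finset E) = S.card + G.rk ↑(Finset.univ \ S)


noncomputable def cntL [DecidableEq E] [LinearOrder E] (G : Multigraph V E) (sgn : E → Bool) (T : Finset E) : ℕ :=
  Nat.card {e : E // sgn e = true ∧ G.IntActive T e}

noncomputable def cntD [DecidableEq E] [LinearOrder E] (G : Multigraph V E) (sgn : E → Bool) (T : Finset E) : ℕ :=
  Nat.card {e : E // sgn e = true ∧ G.IntInactive T e}

noncomputable def cntl [DecidableEq E] [LinearOrder E] (G : Multigraph V E) (sgn : E → Bool) (T : Finset E) : ℕ :=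
  Nat.card {e : E // sgn e = true ∧ G.ExtActive T e}

noncomputable def cntd [DecidableEq E] [LinearOrder E] (G : Multigraph V E) (sgn : E → Bool) (T : Finset E) : ℕ :=
  Nat.card {e : E // sgn e = true ∧ G.ExtInactive T e}

noncomputable def cntLbar [DecidableEq E] [LinearOrder E] (G : Multigraph V E) (sgn : E → Bool) (T : Finset E) : ℕ :=
  Nat.card {e : E // sgn e = false ∧ G.IntActive T e}

noncomputable def cntDbar [DecidableEq E] [LinearOrder E] (G : Multigraph V E) (sgn : E → Bool) (T : Finset E) : ℕ :=
  Nat.card {e : E // sgn e = false ∧ G.IntInactive T e}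

noncomputable def cntlbar [DecidableEq E] [LinearOrder E] (G : Multigraph V E) (sgn : E → Bool) (T : Finset E) : ℕ :=
  Nat.card {e : E // sgn e = false ∧ G.ExtActive T e}

noncomputable def cntdbar [DecidableEq E] [LinearOrder E] (G : Multigraph V E) (sgn : E → Bool) (T : Finset E) : ℕ :=
  Nat.card {e : E // sgn e = false ∧ G.ExtInactive T e}

/-- `u(T) = #L - #l - #L̄ + #l̄`. -/
noncomputable def uGr [DecidableEq E] [LinearOrder E] (G : Multigraph V E) (sgn : E → Bool) (T : Finset E) : ℤ :=
  (G.cntL sgn T : ℤ) - G.cntl sgn T - G.cntLbar sgn T + G.cntlbar sgn T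

/-- `v(T) = #L + #D + #l̄ + #d̄`. -/
noncomputable def vGr [DecidableEq E] [LinearOrder E] (G : Multigraph V E) (sgn : E → Bool) (T : Finset E) : ℤ :=
  (G.cntL sgn T : ℤ) + G.cntD sgn T + G.cntlbar sgn T + G.cntdbar sgn T

lemma connOn_mono (G : Multigraph V E) {S S' : Set E} (h : S ⊆ S') (hc : G.ConnOn S) :
    G.ConnOn S' := by
  intro a b
  refine Relation.EqvGen.mono ?_ _ _ (hc a b)
  rintro x y ⟨e, he, h2⟩; exact ⟨e, h he, h2⟩

lemma compCount_le (G : Multigraph V E) [Fintype V] (S : Set E) :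
    G.compCount S ≤ Fintype.card V := by
  rw [← Nat.card_eq_fintype_card]
  exact Nat.card_le_card_of_surjective (Quotient.mk (G.eqvSetoid S)) Quot.exists_rep

lemma compCount_pos (G : Multigraph V E) [Fintype V] [Nonempty V] (S : Set E) :
    0 < G.compCount S := by
  have : Nonempty (Quotient (G.eqvSetoid S)) := ⟨Quotient.mk _ (Classical.arbitrary V)⟩
  exact Nat.card_pos

lemma connOn_iff_compCount (G : Multigraph V E) [Nonempty V] (S : Set E) :
    G.ConnOn S ↔ G.compCount S = 1 := by
  constructor
  · intro hc
    obtain ⟨v⟩ := ‹Nonempty V›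
    rw [compCount, Nat.card_eq_one_iff_exists]
    refine ⟨Quotient.mk _ v, fun y => ?_⟩
    obtain ⟨a, rfl⟩ := Quot.exists_rep y
    exact Quot.sound (hc a v)
  · intro hc a b
    rw [compCount, Nat.card_eq_one_iff_exists] at hc
    obtain ⟨x, hx⟩ := hc
    have := (hx (Quotient.mk _ a)).trans (hx (Quotient.mk _ b)).symm
    exact Quotient.exact this

lemma compCount_empty (G : Multigraph V E) [Fintype V] :
    G.compCount (∅ : Set E) = Fintype.card V := by
  rw [← Nat.card_eq_fintype_card, compCount]
  refine (Nat.card_eq_of_bijective (Quotient.mk (G.eqvSetoid ∅)) ⟨?_, Quot.exists_rep⟩).symm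
  intro a b h
  have h2 : Relation.EqvGen (G.Adj ∅) a b := Quotient.exact h
  clear h
  induction h2 with
  | rel x y h => exact absurd h.choose_spec.1 (Set.notMem_empty _)
  | refl => rfl
  | symm _ _ _ ih => exact ih.symm
  | trans _ _ _ _ _ ih1 ih2 => exact ih1.trans ih2

/-- For dual spanning trees `T`, `T' = E \ T` of dual plane graphs `G`, `G'`:
`f ∈ cut(T,e) ↔ f' ∈ cyc(T',e')`, `e ∈ cyc(T,f) ↔ e' ∈ cut(T',f')`, and internal activity
of `e` for `T` in `G` corresponds to external activity of `e'` for `T'` in `G'` (the dual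
ordering being the same ordering on the common edge set). -/
theorem stmt6 {V' : Type} [Fintype V] [Fintype V'] [Fintype E] [DecidableEq E] [LinearOrder E]
    (G : Multigraph V E) (G' : Multigraph V' E)
    (hG : G.ConnOn Set.univ) (hG' : G'.ConnOn Set.univ)
    (hdual : IsDualPair G G')
    (T : Finset E) (hT : G.IsSpanningTree T)
    (T' : Finset E) (hT' : T' = Finset.univ \ T)
    (e f : E) (he : e ∈ T) (hf : f ∉ T) :
    (f ∈ G.cut T e ↔ f ∈ G'.cyc T' e) ∧
    (e ∈ G.cyc T f ↔ e ∈ G'.cut T' f) ∧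
    (G.IntActive T e ↔ G'.ExtActive T' e) := by
  classical
  subst hT'
  have hef : e ≠ f := fun h => hf (h ▸ he)
  have hcardV : T.card + 1 = Fintype.card V := by
    rw [← Nat.card_eq_fintype_card]; exact hT.2
  have hne : Nonempty V := by
    rw [← Fintype.card_pos_iff]; omega
  have hcu : G.compCount ↑(Finset.univ : Finset E) = 1 := by
    rw [Finset.coe_univ]; exact (G.connOn_iff_compCount _).mp hG
  have hrkuniv : G.rk ↑(Finset.univ : Finset E) = T.card := by
    rw [rk, hcu]; omega
  have hrkempty : G.rk ↑(∅ : Finset E) = 0 := by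
    rw [rk, Finset.coe_empty, compCount_empty]; omega
  have hTcard : T.card ≤ Fintype.card E := by
    simpa using Finset.card_le_card (Finset.subset_univ T)
  have hne' : Nonempty V' := by
    by_contra h
    have hemp : IsEmpty V' := not_nonempty_iff.mp h
    have h1 := hdual Finset.univ
    have h2 : G'.rk ↑(Finset.univ : Finset E) = 0 := by
      rw [rk]; simp
    rw [h2, hrkuniv, Finset.sdiff_self, hrkempty, Finset.card_univ] at h1
    have hTu : T = Finset.univ := Finset.eq_univ_of_card T (by omega)
    exact hf (hTu ▸ Finset.mem_univ f)
  have hcu' : G'.compCount ↑(Finset.univ : Finset E) = 1 := by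
    rw [Finset.coe_univ]; exact (G'.connOn_iff_compCount _).mp hG'
  have hV'pos : 0 < Fintype.card V' := Fintype.card_pos
  have heuler : (Fintype.card V' - 1) + T.card = Fintype.card E := by
    have h1 := hdual Finset.univ
    rw [hrkuniv, Finset.sdiff_self, hrkempty, Finset.card_univ, rk, hcu'] at h1
    omega
  have key : ∀ S : Finset E,
      (Fintype.card V' - G'.compCount ↑(Finset.univ \ S)) + T.card
        = (Fintype.card E - S.card) + (Fintype.card V - G.compCount ↑S) := by
    intro S
    have h2 := hdual (Finset.univ \ S)
    rw [Finset.sdiff_sdiff_self_left, Finset.univ_inter, hrkuniv,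
      Finset.card_sdiff_of_subset (Finset.subset_univ S), Finset.card_univ] at h2
    simp only [rk] at h2
    exact h2
  have crit : ∀ S : Finset E, S.card = T.card →
      (G.ConnOn ↑S ↔ G'.ConnOn ↑(Finset.univ \ S)) := by
    intro S hcard
    have hk := key S
    have h1 := G.compCount_pos (S : Set E)
    have h2 := G.compCount_le (S : Set E)
    have h3 := G'.compCount_pos ((Finset.univ \ S : Finset E) : Set E)
    have h4 := G'.compCount_le ((Finset.univ \ S : Finset E) : Set E)
    rw [G.connOn_iff_compCount, G'.connOn_iff_compCount]
    omega
  have notconn : ∀ S : Finset E, S.card + 1 = T.card → ¬ G.ConnOn ↑S := by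
    intro S hcard hcon
    have hk := key S
    have h3 := G'.compCount_pos ((Finset.univ \ S : Finset E) : Set E)
    have h4 := G'.compCount_le ((Finset.univ \ S : Finset E) : Set E)
    have h2 := G.compCount_le (S : Set E)
    rw [G.connOn_iff_compCount] at hcon
    omega
  have hcompl : ∀ g, g ∉ T →
      Finset.univ \ (T.erase e ∪ {g}) = (Finset.univ \ T).erase g ∪ {e} := by
    intro g hg
    have hge : g ≠ e := fun h => hg (h ▸ he)
    ext x
    simp only [Finset.mem_sdiff, Finset.mem_union, Finset.mem_erase, Finset.mem_singleton,
      Finset.mem_univ, true_and, not_or, not_and]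
    rcases eq_or_ne x e with rfl | hxe
    · simp [he, hge.symm]
    · rcases eq_or_ne x g with rfl | hxg
      · simp [hg, hge]
      · simp only [hxe, hxg, not_false_iff, and_true, or_false]
        tauto
  have hcardS : ∀ g, g ∉ T → (T.erase e ∪ {g}).card = T.card := by
    intro g hg
    have hd : Disjoint (T.erase e) {g} :=
      Finset.disjoint_singleton_right.mpr (fun h => hg (Finset.mem_of_mem_erase h))
    have hTpos : 0 < T.card := Finset.card_pos.mpr ⟨e, he⟩
    rw [Finset.card_union_of_disjoint hd, Finset.card_singleton, Finset.card_erase_of_mem he]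
    omega
  have main : ∀ g, g ∉ T →
      (G.ConnOn ↑(T.erase e ∪ {g}) ↔ G'.ConnOn ↑((Finset.univ \ T).erase g ∪ {e})) := by
    intro g hg
    rw [← hcompl g hg]
    exact crit _ (hcardS g hg)
  have hconnT' : G'.ConnOn ↑(Finset.univ \ T) := (crit T rfl).mp hT.1
  have hsets : G.cut T e = G'.cyc (Finset.univ \ T) e := by
    ext g
    simp only [cut, cyc, Set.mem_setOf_eq, Finset.mem_sdiff, Finset.mem_univ, true_and]
    by_cases hg : g ∈ T
    · rcases eq_or_ne g e with rfl | hge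
      · rw [Finset.union_comm, ← Finset.insert_eq, Finset.insert_erase he]
        have hrhs : G'.ConnOn ↑((Finset.univ \ T).erase g ∪ {g}) := by
          refine G'.connOn_mono ?_ hconnT'
          intro x hx
          simp only [Finset.coe_union, Finset.coe_erase, Set.mem_union, Set.mem_diff,
            Finset.coe_singleton, Set.mem_singleton_iff]
          rcases eq_or_ne x g with rfl | hxg
          · exact Or.inr rfl
          · exact Or.inl ⟨hx, hxg⟩
        exact ⟨fun _ => ⟨Or.inr rfl, hrhs⟩, fun _ => hT.1⟩
      · have hset : T.erase e ∪ {g} = T.erase e :=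
          Finset.union_eq_left.mpr (Finset.singleton_subset_iff.mpr (Finset.mem_erase.mpr ⟨hge, hg⟩))
        have hTpos : 0 < T.card := Finset.card_pos.mpr ⟨e, he⟩
        have hlhs : ¬ G.ConnOn ↑(T.erase e ∪ {g}) := by
          rw [hset]
          exact notconn _ (by rw [Finset.card_erase_of_mem he]; omega)
        refine iff_of_false hlhs ?_
        rintro ⟨h1 | h1, -⟩
        · exact h1 hg
        · exact hge h1
    · have h1 : (g ∉ T ∨ g = e) := Or.inl hg
      rw [main g hg]
      simp [hg]
  refine ⟨?_, ?_, ?_⟩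
  · rw [hsets]
  · simp only [cyc, cut, Set.mem_setOf_eq]
    rw [main f hf]
    simp [he]
  · simp only [IntActive, ExtActive, Finset.mem_sdiff, Finset.mem_univ, true_and, not_not]
    rw [hsets]


end Multigraph
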